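/- arXiv:2109.11263 — 7 statements merged into one kernel-verified Lean document; each statement's English description precedes it below -/
import Mathlib

section
/- Let P be a partition in a set A and let B, C ⊆ R(P) with B ∩ C = ∅. Then (P/P_(B))_(C) = P_(B∪C) / (P_(B∪C))_(B), where (P_(B∪C))_(B) = P_(B); consequently (P/P_(B)) / (P/P_(B))_(C) = (P/P_(B)) / (P_(B∪C)/(P_(B∪C))_(B)). -/
namespace PartitionOps

variable {α : Type*} [DecidableEq α]

/-- The support `R(P)` of a collection of finite sets: the union of its members. -/
def supp (P : Finset (Finset α)) : Finset α := P.sup id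

/-- A partition in `A`: a finite collection of pairwise disjoint nonempty finite sets. -/
def IsPartition (P : Finset (Finset α)) : Prop :=
  (∀ I ∈ P, I.Nonempty) ∧ ∀ I ∈ P, ∀ I' ∈ P, I ≠ I' → Disjoint I I'

/-- The restriction `P_(B) = { I ∩ B : I ∈ P, I ∩ B ≠ ∅ }`. -/
def restrict (P : Finset (Finset α)) (B : Finset α) : Finset (Finset α) :=
  (P.filter fun I => (I ∩ B).Nonempty).image (· ∩ B)

/-- `R_{P,B}`: the union of the members of `P` meeting `B`. -/
def RB (P : Finset (Finset α)) (B : Finset α) : Finset α :=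
  (P.filter fun I => (I ∩ B).Nonempty).sup id

/-- The quotient `P / P_(B)`: the members of `P` disjoint from `B`, together with
`R_{P,B} \ B` (omitted when empty). -/
def quot (P : Finset (Finset α)) (B : Finset α) : Finset (Finset α) :=
  (insert (RB P B \ B) (P.filter fun I => I ∩ B = ∅)).erase ∅

/-- Quotient of `P` by a partition `Q` (meaningful when `Q` coincides with the
restriction of `P` to the support of `Q`): `P / Q := P / P_(R(Q))`. -/
def quotBy (P Q : Finset (Finset α)) : Finset (Finset α) := quot P (supp Q)

section Aux

variable {P : Finset (Finset α)} {B C S K : Finset α} {x : α}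

lemma mem_RB_iff : x ∈ RB P B ↔ ∃ I ∈ P, (I ∩ B).Nonempty ∧ x ∈ I := by
  simp [RB, Finset.mem_sup, Finset.mem_filter, and_assoc]

lemma mem_restrict_iff : K ∈ restrict P B ↔ ∃ I ∈ P, (I ∩ B).Nonempty ∧ I ∩ B = K := by
  simp [restrict, Finset.mem_image, Finset.mem_filter, and_assoc]

lemma mem_quot_iff : K ∈ quot P B ↔ K ≠ ∅ ∧ (K = RB P B \ B ∨ (K ∈ P ∧ K ∩ B = ∅)) := by
  simp [quot, Finset.mem_erase, Finset.mem_insert, Finset.mem_filter]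

lemma mem_supp_iff : x ∈ supp P ↔ ∃ I ∈ P, x ∈ I := by
  simp [supp, Finset.mem_sup]

lemma quot_congr (h : ∀ I ∈ P, I ∩ S = I ∩ C) : quot P S = quot P C := by
  have hfil : ∀ (p : Finset α → Prop) [DecidablePred p], True := fun _ _ => trivial
  have hRB : RB P S = RB P C := by
    unfold RB
    congr 1
    apply Finset.filter_congr
    intro I hI
    rw [h I hI]
  have hdiff : RB P S \ S = RB P C \ C := by
    ext x
    simp only [Finset.mem_sdiff, hRB]
    constructor
    · rintro ⟨hx, hnS⟩
      refine ⟨hx, fun hxC => hnS ?_⟩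
      obtain ⟨I, hI, -, hxI⟩ := mem_RB_iff.1 hx
      have hx2 : x ∈ I ∩ C := Finset.mem_inter.2 ⟨hxI, hxC⟩
      rw [← h I hI] at hx2
      exact (Finset.mem_inter.1 hx2).2
    · rintro ⟨hx, hnC⟩
      refine ⟨hx, fun hxS => hnC ?_⟩
      obtain ⟨I, hI, -, hxI⟩ := mem_RB_iff.1 hx
      have hx2 : x ∈ I ∩ S := Finset.mem_inter.2 ⟨hxI, hxS⟩
      rw [h I hI] at hx2
      exact (Finset.mem_inter.1 hx2).2
  unfold quot
  rw [hdiff]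
  congr 1
  congr 1
  apply Finset.filter_congr
  intro I hI
  rw [h I hI]

lemma quot_supp_inter : quot P (supp P ∩ C) = quot P C := by
  apply quot_congr
  intro I hI
  ext x
  simp only [Finset.mem_inter]
  constructor
  · rintro ⟨hxI, -, hxC⟩; exact ⟨hxI, hxC⟩
  · rintro ⟨hxI, hxC⟩; exact ⟨hxI, mem_supp_iff.2 ⟨I, hI, hxI⟩, hxC⟩

lemma supp_restrict : supp (restrict P C) = supp P ∩ C := by
  ext x
  simp only [Finset.mem_inter, mem_supp_iff]
  constructor
  · rintro ⟨J, hJ, hxJ⟩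
    obtain ⟨I, hI, -, rfl⟩ := mem_restrict_iff.1 hJ
    obtain ⟨hxI, hxC⟩ := Finset.mem_inter.1 hxJ
    exact ⟨⟨I, hI, hxI⟩, hxC⟩
  · rintro ⟨⟨I, hI, hxI⟩, hxC⟩
    have hx : x ∈ I ∩ C := Finset.mem_inter.2 ⟨hxI, hxC⟩
    exact ⟨I ∩ C, mem_restrict_iff.2 ⟨I, hI, ⟨x, hx⟩, rfl⟩, hx⟩

lemma key_inter (hBC : Disjoint B C) (I : Finset α) : I ∩ (B ∪ C) ∩ B = I ∩ B := by
  ext x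
  simp only [Finset.mem_inter, Finset.mem_union]
  tauto

lemma inter_union_of_empty (hIB : K ∩ B = ∅) : K ∩ (B ∪ C) = K ∩ C := by
  ext x
  simp only [Finset.mem_inter, Finset.mem_union]
  constructor
  · rintro ⟨hxK, hxB | hxC⟩
    · exact absurd (Finset.mem_inter.2 ⟨hxK, hxB⟩) (by simp [hIB])
    · exact ⟨hxK, hxC⟩
  · rintro ⟨hxK, hxC⟩; exact ⟨hxK, Or.inr hxC⟩

lemma RB_restrict_sdiff (hBC : Disjoint B C) :
    RB (restrict P (B ∪ C)) B \ B = RB P B ∩ C := by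
  ext x
  simp only [Finset.mem_sdiff, Finset.mem_inter, mem_RB_iff]
  constructor
  · rintro ⟨⟨J, hJ, hne, hxJ⟩, hxB⟩
    obtain ⟨I, hI, hne', rfl⟩ := mem_restrict_iff.1 hJ
    rw [key_inter hBC] at hne
    obtain ⟨hxI, hxBC⟩ := Finset.mem_inter.1 hxJ
    have hxC : x ∈ C := (Finset.mem_union.1 hxBC).resolve_left hxB
    exact ⟨⟨I, hI, hne, hxI⟩, hxC⟩
  · rintro ⟨⟨I, hI, hne, hxI⟩, hxC⟩
    have hxB : x ∉ B := Finset.disjoint_right.1 hBC hxC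
    have hne2 : (I ∩ (B ∪ C)).Nonempty :=
      hne.mono (Finset.inter_subset_inter (le_refl I) Finset.subset_union_left)
    refine ⟨⟨I ∩ (B ∪ C), mem_restrict_iff.2 ⟨I, hI, hne2, rfl⟩, ?_, ?_⟩, hxB⟩
    · rw [key_inter hBC]; exact hne
    · exact Finset.mem_inter.2 ⟨hxI, Finset.mem_union.2 (Or.inr hxC)⟩

lemma sdiff_inter_right (hBC : Disjoint B C) (s : Finset α) :
    (s \ B) ∩ C = s ∩ C := by
  ext x
  simp only [Finset.mem_inter, Finset.mem_sdiff]
  constructor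
  · rintro ⟨⟨hs, -⟩, hc⟩; exact ⟨hs, hc⟩
  · rintro ⟨hs, hc⟩; exact ⟨⟨hs, Finset.disjoint_right.1 hBC hc⟩, hc⟩

lemma part1 (hBC : Disjoint B C) :
    restrict (quot P B) C = quot (restrict P (B ∪ C)) B := by
  ext K
  rw [mem_restrict_iff, mem_quot_iff, RB_restrict_sdiff hBC]
  constructor
  · rintro ⟨J, hJ, hne, rfl⟩
    obtain ⟨hJne, hJcase | ⟨hJP, hJB⟩⟩ := mem_quot_iff.1 hJ
    · subst hJcase
      rw [sdiff_inter_right hBC] at hne ⊢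
      exact ⟨hne.ne_empty, Or.inl rfl⟩
    · have hJBC : J ∩ (B ∪ C) = J ∩ C := inter_union_of_empty hJB
      refine ⟨hne.ne_empty, Or.inr ⟨?_, ?_⟩⟩
      · exact mem_restrict_iff.2 ⟨J, hJP, by rw [hJBC]; exact hne, hJBC⟩
      · rw [Finset.inter_assoc, (Finset.disjoint_iff_inter_eq_empty.1 hBC.symm),
          Finset.inter_empty]
  · rintro ⟨hKne, hKcase | ⟨hKQ, hKB⟩⟩
    · subst hKcase
      have hKne' : (RB P B ∩ C).Nonempty := Finset.nonempty_iff_ne_empty.2 hKne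
      have heq : (RB P B \ B) ∩ C = RB P B ∩ C := sdiff_inter_right hBC _
      have hJne : (RB P B \ B).Nonempty := by
        rw [← heq] at hKne'
        exact hKne'.mono Finset.inter_subset_left
      rw [← heq] at hKne'
      exact ⟨RB P B \ B, mem_quot_iff.2 ⟨Finset.nonempty_iff_ne_empty.1 hJne, Or.inl rfl⟩,
        hKne', heq⟩
    · obtain ⟨I, hI, hne', rfl⟩ := mem_restrict_iff.1 hKQ
      rw [key_inter hBC] at hKB
      have hIBC : I ∩ (B ∪ C) = I ∩ C := inter_union_of_empty hKB
      rw [hIBC] at hKne hne' ⊢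
      have hICne : (I ∩ C).Nonempty := Finset.nonempty_iff_ne_empty.2 hKne
      refine ⟨I, mem_quot_iff.2 ⟨?_, Or.inr ⟨hI, hKB⟩⟩, hICne, rfl⟩
      exact Finset.nonempty_iff_ne_empty.1 (hICne.mono Finset.inter_subset_left)

/-- for `B, C ⊆ R(P)` disjoint, `(P/P_(B))_(C) = P_(B∪C) / (P_(B∪C))_(B)`,
where `(P_(B∪C))_(B) = P_(B)`; consequently
`(P/P_(B)) / (P/P_(B))_(C) = (P/P_(B)) / (P_(B∪C)/(P_(B∪C))_(B))`. -/
theorem restrict_quot_eq (P : Finset (Finset α)) (hP : IsPartition P)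
    (B C : Finset α) (hB : B ⊆ supp P) (hC : C ⊆ supp P) (hBC : Disjoint B C) :
    restrict (quot P B) C = quot (restrict P (B ∪ C)) B ∧
      restrict (restrict P (B ∪ C)) B = restrict P B ∧
      quot (quot P B) C = quotBy (quot P B) (quot (restrict P (B ∪ C)) B) := by
  refine ⟨part1 hBC, ?_, ?_⟩
  · ext K
    rw [mem_restrict_iff, mem_restrict_iff]
    constructor
    · rintro ⟨J, hJ, hne, rfl⟩
      obtain ⟨I, hI, -, rfl⟩ := mem_restrict_iff.1 hJ
      rw [key_inter hBC] at hne ⊢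
      exact ⟨I, hI, hne, rfl⟩
    · rintro ⟨I, hI, hne, rfl⟩
      have hne2 : (I ∩ (B ∪ C)).Nonempty :=
        hne.mono (Finset.inter_subset_inter (le_refl I) Finset.subset_union_left)
      refine ⟨I ∩ (B ∪ C), mem_restrict_iff.2 ⟨I, hI, hne2, rfl⟩, ?_, key_inter hBC I⟩
      rw [key_inter hBC]; exact hne
  · unfold quotBy
    rw [← part1 hBC, supp_restrict, quot_supp_inter]

end Aux

end PartitionOps
end

section
/- Let P be a partition in a set A and let B, C ⊆ R(P) with B ∩ C = ∅. If R_{P,B} ∩ R_{P,C} = ∅, then (P/P_(B))_(C) = P_(C) and (P/P_(C))_(B) = P_(B). -/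
namespace PartitionOps

variable {α : Type*} [DecidableEq α]

lemma subset_RB {P : Finset (Finset α)} {B I : Finset α} (hI : I ∈ P)
    (hn : (I ∩ B).Nonempty) : I ⊆ RB P B := by
  intro x hx
  simp only [RB, Finset.mem_sup, Finset.mem_filter, id]
  exact ⟨I, ⟨hI, hn⟩, hx⟩

lemma restrict_quot_aux (P : Finset (Finset α)) (hP : IsPartition P)
    (B C : Finset α) (hC : C ⊆ supp P)
    (hR : Disjoint (RB P B) (RB P C)) :
    restrict (quot P B) C = restrict P C := by
  have hRBC : (RB P B \ B) ∩ C = ∅ := by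
    apply Finset.eq_empty_of_forall_notMem
    intro c hc
    simp only [Finset.mem_inter, Finset.mem_sdiff] at hc
    obtain ⟨⟨hcR, _⟩, hcC⟩ := hc
    have := hC hcC
    simp only [supp, Finset.mem_sup, id] at this
    obtain ⟨I, hI, hcI⟩ := this
    have : c ∈ RB P C := subset_RB hI ⟨c, Finset.mem_inter.mpr ⟨hcI, hcC⟩⟩ hcI
    exact (Finset.disjoint_left.mp hR hcR) this
  have hfil : (quot P B).filter (fun I => (I ∩ C).Nonempty)
      = P.filter (fun I => (I ∩ C).Nonempty) := by
    ext I
    simp only [quot, Finset.mem_filter, Finset.mem_erase, Finset.mem_insert]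
    constructor
    · rintro ⟨⟨hne, hI | hI⟩, hIC⟩
      · subst hI
        rw [hRBC] at hIC
        exact absurd hIC (by simp)
      · exact ⟨hI.1, hIC⟩
    · rintro ⟨hI, hIC⟩
      have hIne : I ≠ ∅ := by
        rintro rfl; simp at hIC
      have hIB : I ∩ B = ∅ := by
        by_contra h
        have hnB : (I ∩ B).Nonempty := Finset.nonempty_iff_ne_empty.mpr h
        have h1 : I ⊆ RB P B := subset_RB hI hnB
        have h2 : I ⊆ RB P C := subset_RB hI hIC
        obtain ⟨x, hx⟩ := hP.1 I hI
        exact Finset.disjoint_left.mp hR (h1 hx) (h2 hx)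
      exact ⟨⟨hIne, Or.inr ⟨hI, hIB⟩⟩, hIC⟩
  simp only [restrict, hfil]

/-- if `B ∩ C = ∅` and `R_{P,B} ∩ R_{P,C} = ∅`, then
`(P/P_(B))_(C) = P_(C)` and `(P/P_(C))_(B) = P_(B)`. -/
theorem restrict_quot_of_disjoint_RB (P : Finset (Finset α)) (hP : IsPartition P)
    (B C : Finset α) (hB : B ⊆ supp P) (hC : C ⊆ supp P) (hBC : Disjoint B C)
    (hR : Disjoint (RB P B) (RB P C)) :
    restrict (quot P B) C = restrict P C ∧ restrict (quot P C) B = restrict P B := by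
  exact ⟨restrict_quot_aux P hP B C hC hR,
    restrict_quot_aux P hP C B hB hR.symm⟩

end PartitionOps
end

section
/- Let P be a partition in a set A and let B, C ⊆ R(P) with B ∩ C = ∅ and R_{P,B} ∩ R_{P,C} = ∅. Then (P/P_(B)) / (P/P_(B))_(C) = (P/P_(C)) / (P/P_(C))_(B), and moreover both equal the collection { I ∈ P : I ∩ (B∪C) = ∅ } ∪ { R_{P,B} \ B } ∪ { R_{P,C} \ C } (empty sets omitted). -/
namespace PartitionOps

variable {α : Type*} [DecidableEq α]

lemma mem_RB {P : Finset (Finset α)} {B : Finset α} {x : α} :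
    x ∈ RB P B ↔ ∃ I ∈ P, (I ∩ B).Nonempty ∧ x ∈ I := by
  simp [RB, Finset.mem_sup, Finset.mem_filter, and_assoc]

/-- No member meets both B and C. -/
lemma cross {P : Finset (Finset α)} {B C : Finset α}
    (hR : Disjoint (RB P B) (RB P C)) {I : Finset α} (hI : I ∈ P)
    (h : (I ∩ C).Nonempty) : I ∩ B = ∅ := by
  by_contra h'
  rw [← ne_eq, ← Finset.nonempty_iff_ne_empty] at h'
  obtain ⟨x, hx⟩ := h
  have hxB : x ∈ RB P B := mem_RB.2 ⟨I, hI, h', (Finset.mem_inter.1 hx).1⟩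
  have hxC : x ∈ RB P C := mem_RB.2 ⟨I, hI, ⟨x, hx⟩, (Finset.mem_inter.1 hx).1⟩
  exact (Finset.disjoint_left.1 hR hxB) hxC

/-- `C` is disjoint from `R_{P,B}`. -/
lemma C_disj_RB {P : Finset (Finset α)} (hP : IsPartition P) {B C : Finset α}
    (hC : C ⊆ supp P) (hR : Disjoint (RB P B) (RB P C)) :
    (RB P B \ B) ∩ C = ∅ := by
  rw [Finset.eq_empty_iff_forall_notMem]
  intro x hx
  rw [Finset.mem_inter, Finset.mem_sdiff] at hx
  obtain ⟨⟨hxRB, _⟩, hxC⟩ := hx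
  obtain ⟨I, hI, hmB, hxI⟩ := mem_RB.1 hxRB
  obtain ⟨I', hI', hxI'⟩ := by
    have := hC hxC
    simpa [supp, Finset.mem_sup] using this
  have hII : I = I' := by
    by_contra hne
    exact (Finset.disjoint_left.1 (hP.2 I hI I' hI' hne) hxI) hxI'
  subst hII
  have h0 : I ∩ B = ∅ := cross hR hI ⟨x, Finset.mem_inter.2 ⟨hxI, hxC⟩⟩
  rw [h0] at hmB
  simp at hmB

lemma RB_quot {P : Finset (Finset α)} (hP : IsPartition P) {B C : Finset α}
    (hC : C ⊆ supp P) (hR : Disjoint (RB P B) (RB P C)) :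
    RB (quot P B) C = RB P C := by
  have hd := C_disj_RB hP hC hR
  ext x
  rw [mem_RB, mem_RB]
  constructor
  · rintro ⟨J, hJ, hJC, hxJ⟩
    simp only [quot, Finset.mem_erase, Finset.mem_insert, Finset.mem_filter] at hJ
    rcases hJ.2 with h | ⟨hJP, _⟩
    · subst h
      exact absurd (hd ▸ hJC) (by simp)
    · exact ⟨J, hJP, hJC, hxJ⟩
  · rintro ⟨I, hI, hIC, hxI⟩
    refine ⟨I, ?_, hIC, hxI⟩
    have hIB := cross hR hI hIC
    simp only [quot, Finset.mem_erase, Finset.mem_insert, Finset.mem_filter]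
    exact ⟨Finset.nonempty_iff_ne_empty.1 (hIC.mono (Finset.inter_subset_left)), Or.inr ⟨hI, hIB⟩⟩

lemma main {P : Finset (Finset α)} (hP : IsPartition P) {B C : Finset α}
    (hC : C ⊆ supp P) (hR : Disjoint (RB P B) (RB P C)) :
    quot (quot P B) C =
      (insert (RB P B \ B) (insert (RB P C \ C)
        (P.filter fun I => I ∩ (B ∪ C) = ∅))).erase ∅ := by
  have hrb := RB_quot hP hC hR
  have hd := C_disj_RB hP hC hR
  ext J
  simp only [quot, Finset.mem_erase, Finset.mem_insert, Finset.mem_filter,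
    Finset.inter_union_distrib_left, Finset.union_eq_empty]
  simp only [quot] at hrb
  rw [hrb]
  constructor
  · rintro ⟨hne, h | ⟨⟨_, h | ⟨hJP, hJB⟩⟩, hJC⟩⟩
    · exact ⟨hne, Or.inr (Or.inl h)⟩
    · exact ⟨hne, Or.inl h⟩
    · exact ⟨hne, Or.inr (Or.inr ⟨hJP, hJB, hJC⟩)⟩
  · rintro ⟨hne, h | h | ⟨hJP, hJB, hJC⟩⟩
    · exact ⟨hne, Or.inr ⟨⟨hne, Or.inl h⟩, h ▸ hd⟩⟩
    · exact ⟨hne, Or.inl h⟩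
    · exact ⟨hne, Or.inr ⟨⟨hne, Or.inr ⟨hJP, hJB⟩⟩, hJC⟩⟩

/-- if `B ∩ C = ∅` and `R_{P,B} ∩ R_{P,C} = ∅`, then
`(P/P_(B)) / (P/P_(B))_(C) = (P/P_(C)) / (P/P_(C))_(B)`, and both equal
`{ I ∈ P : I ∩ (B∪C) = ∅ } ∪ { R_{P,B} \ B } ∪ { R_{P,C} \ C }` (empty sets omitted). -/
theorem quot_quot_of_disjoint_RB (P : Finset (Finset α)) (hP : IsPartition P)
    (B C : Finset α) (hB : B ⊆ supp P) (hC : C ⊆ supp P) (hBC : Disjoint B C)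
    (hR : Disjoint (RB P B) (RB P C)) :
    quot (quot P B) C = quot (quot P C) B ∧
      quot (quot P B) C =
        (insert (RB P B \ B) (insert (RB P C \ C)
          (P.filter fun I => I ∩ (B ∪ C) = ∅))).erase ∅ := by
  have h1 := main hP hC hR
  have h2 := main hP hB hR.symm
  refine ⟨?_, h1⟩
  rw [h1, h2, Finset.insert_comm, Finset.union_comm]



end PartitionOps
end

section
/- Let P be a partition in a set A and let B, C ⊆ R(P) with B ∩ C = ∅ and R_{P,B} ∩ R_{P,C} ≠ ∅. Then (P/P_(B)) / (P/P_(B))_(C) = P / P_(B∪C); explicitly, both sides equal { I ∈ P : I ∩ (B∪C) = ∅ } ∪ { R_{P,B∪C} \ (B∪C) }. -/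
namespace PartitionOps

variable {α : Type*} [DecidableEq α]

lemma mem_quot {P : Finset (Finset α)} {B : Finset α} {Y : Finset α} :
    Y ∈ quot P B ↔ Y ≠ ∅ ∧ (Y = RB P B \ B ∨ (Y ∈ P ∧ Y ∩ B = ∅)) := by
  simp only [quot, Finset.mem_erase, Finset.mem_insert, Finset.mem_filter]

/-- if `B ∩ C = ∅` and `R_{P,B} ∩ R_{P,C} ≠ ∅`, then
`(P/P_(B)) / (P/P_(B))_(C) = P / P_(B∪C)`; explicitly, both sides equal
`{ I ∈ P : I ∩ (B∪C) = ∅ } ∪ { R_{P,B∪C} \ (B∪C) }`. -/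
theorem quot_quot_of_not_disjoint_RB (P : Finset (Finset α)) (hP : IsPartition P)
    (B C : Finset α) (hB : B ⊆ supp P) (hC : C ⊆ supp P) (hBC : Disjoint B C)
    (hR : (RB P B ∩ RB P C).Nonempty) :
    quot (quot P B) C = quot P (B ∪ C) ∧
      quot (quot P B) C =
        (insert (RB P (B ∪ C) \ (B ∪ C)) (P.filter fun I => I ∩ (B ∪ C) = ∅)).erase ∅ := by
  classical
  obtain ⟨x, hx⟩ := hR
  rw [Finset.mem_inter] at hx
  obtain ⟨I, hIP, hIB, hxI⟩ := mem_RB.mp hx.1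
  obtain ⟨J, hJP, hJC, hxJ⟩ := mem_RB.mp hx.2
  have hIJ : I = J := by
    by_contra h
    exact (Finset.disjoint_left.mp (hP.2 I hIP J hJP h) hxI) hxJ
  subst hIJ
  obtain ⟨y, hy⟩ := hJC
  rw [Finset.mem_inter] at hy
  have hyB : y ∉ B := fun h => Finset.disjoint_left.mp hBC h hy.2
  have key1 : ((RB P B \ B) ∩ C).Nonempty :=
    ⟨y, Finset.mem_inter.mpr ⟨Finset.mem_sdiff.mpr ⟨mem_RB.mpr ⟨I, hIP, hIB, hy.1⟩, hyB⟩, hy.2⟩⟩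
  have key1' : (RB P B \ B) ∩ C ≠ ∅ := Finset.nonempty_iff_ne_empty.mp key1
  have key2 : RB (quot P B) C = RB P (B ∪ C) \ B := by
    ext z
    rw [mem_RB, Finset.mem_sdiff, mem_RB]
    constructor
    · rintro ⟨Y, hY, hYC, hzY⟩
      rw [mem_quot] at hY
      rcases hY.2 with rfl | ⟨hYP, hYB⟩
      · rw [Finset.mem_sdiff, mem_RB] at hzY
        obtain ⟨⟨K, hKP, hKB, hzK⟩, hzB⟩ := hzY
        exact ⟨⟨K, hKP, hKB.mono (Finset.inter_subset_inter Finset.Subset.rfl Finset.subset_union_left), hzK⟩,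
          hzB⟩
      · refine ⟨⟨Y, hYP,
          hYC.mono (Finset.inter_subset_inter Finset.Subset.rfl Finset.subset_union_right), hzY⟩, ?_⟩
        intro hzB
        exact absurd (Finset.mem_inter.mpr ⟨hzY, hzB⟩) (by simp [hYB])
    · rintro ⟨⟨K, hKP, hKBC, hzK⟩, hzB⟩
      by_cases hKB : (K ∩ B).Nonempty
      · refine ⟨RB P B \ B, ?_, key1,
          Finset.mem_sdiff.mpr ⟨mem_RB.mpr ⟨K, hKP, hKB, hzK⟩, hzB⟩⟩
        rw [mem_quot]
        exact ⟨Finset.nonempty_iff_ne_empty.mp (key1.mono Finset.inter_subset_left), Or.inl rfl⟩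
      · have hKB' : K ∩ B = ∅ := Finset.not_nonempty_iff_eq_empty.mp hKB
        have hKC : (K ∩ C).Nonempty := by
          rw [Finset.inter_union_distrib_left, hKB', Finset.empty_union] at hKBC
          exact hKBC
        refine ⟨K, ?_, hKC, hzK⟩
        rw [mem_quot]
        exact ⟨Finset.nonempty_iff_ne_empty.mp (hP.1 K hKP), Or.inr ⟨hKP, hKB'⟩⟩
  have hsd : RB (quot P B) C \ C = RB P (B ∪ C) \ (B ∪ C) := by
    rw [key2, sdiff_sdiff_left]; rfl
  have main : quot (quot P B) C = quot P (B ∪ C) := by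
    ext Y
    simp only [mem_quot, hsd]
    constructor
    · rintro ⟨hY, h | ⟨⟨-, rfl | ⟨hYP, hYB⟩⟩, hYC⟩⟩
      · exact ⟨hY, Or.inl h⟩
      · exact absurd hYC key1'
      · refine ⟨hY, Or.inr ⟨hYP, ?_⟩⟩
        rw [Finset.inter_union_distrib_left, hYB, hYC, Finset.empty_union]
    · rintro ⟨hY, h | ⟨hYP, hYBC⟩⟩
      · exact ⟨hY, Or.inl h⟩
      · rw [Finset.inter_union_distrib_left, Finset.union_eq_empty] at hYBC
        exact ⟨hY, Or.inr ⟨⟨hY, Or.inr ⟨hYP, hYBC.1⟩⟩, hYBC.2⟩⟩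
  exact ⟨main, main⟩

end PartitionOps
end

section
/- Let P be a partition in a set A and B ⊆ R(P) with R_{P,B} \ B ≠ ∅. Then P = (P/P_(B)) ∘_B P_(B), i.e., P is recovered by inserting P_(B) into the quotient P/P_(B) at the member R_{P,B} \ B via the map ι sending each x ∈ I ∩ (R_{P,B} \ B) (for I ∈ P with I ∩ B ≠ ∅) to the member I ∩ B of P_(B). -/
namespace PartitionOps

variable {α : Type*} [DecidableEq α]

/-- The preimage `ι⁻¹(J) ⊆ B` of a member `J` under a map `ι` defined on `B`. -/
def fiber (B : Finset α) (f : {x // x ∈ B} → Finset α) (J : Finset α) : Finset α :=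
  (B.attach.filter fun x => f x = J).image Subtype.val

/-- The insertion `P ∘ₐ^ι Q` of `Q` into `P` at the member `Ia` via `ι : Ia → Q`:
remove `Ia` from `P` and add the sets `J ∪ ι⁻¹(J)` for the members `J` of `Q`. -/
def ins (P : Finset (Finset α)) (Ia : Finset α) (Q : Finset (Finset α))
    (ι : {x // x ∈ Ia} → {J // J ∈ Q}) : Finset (Finset α) :=
  P.erase Ia ∪ Q.image fun J => J ∪ fiber Ia (fun x => (ι x : Finset α)) J

/-- for `B ⊆ R(P)` with `R_{P,B} \ B ≠ ∅`,
`P = (P/P_(B)) ∘_B P_(B)`: inserting `P_(B)` into the quotient `P/P_(B)` at the member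
`R_{P,B} \ B` via the map sending each `x ∈ I ∩ (R_{P,B} \ B)` (for `I ∈ P` with
`I ∩ B ≠ ∅`) to the member `I ∩ B` of `P_(B)` recovers `P`. -/
theorem ins_quot_restrict (P : Finset (Finset α)) (hP : IsPartition P)
    (B : Finset α) (hB : B ⊆ supp P) (hne : (RB P B \ B).Nonempty)
    (ι : {x // x ∈ RB P B \ B} → {J // J ∈ restrict P B})
    (hι : ∀ I ∈ P, (I ∩ B).Nonempty →
      ∀ x : {x // x ∈ RB P B \ B}, (x : α) ∈ I → (ι x : Finset α) = I ∩ B) :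
    P = ins (quot P B) (RB P B \ B) (restrict P B) ι := by
  obtain ⟨hPne, hPd⟩ := hP
  have hsub : ∀ I ∈ P, (I ∩ B).Nonempty → I ⊆ RB P B := by
    intro I hI h x hx
    rw [RB, Finset.mem_sup]
    exact ⟨I, Finset.mem_filter.mpr ⟨hI, h⟩, hx⟩
  -- S := RB P B \ B is not a member of the filtered set G
  have hSG : (RB P B \ B) ∉ P.filter (fun I => I ∩ B = ∅) := by
    intro hmem
    rw [Finset.mem_filter] at hmem
    obtain ⟨hSP, hSB⟩ := hmem
    obtain ⟨x, hx⟩ := hne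
    have hxR : x ∈ RB P B := (Finset.mem_sdiff.mp hx).1
    simp only [RB, Finset.mem_sup, id] at hxR
    obtain ⟨I, hI, hxI⟩ := hxR
    rw [Finset.mem_filter] at hI
    by_cases hIS : I = RB P B \ B
    · rw [hIS] at hI
      rw [hSB] at hI
      exact Finset.not_nonempty_empty hI.2
    · exact Finset.disjoint_left.mp (hPd I hI.1 _ hSP hIS) hxI hx
  -- erase part of the insertion
  have hq : (quot P B).erase (RB P B \ B) = P.filter (fun I => I ∩ B = ∅) := by
    ext K
    simp only [quot, Finset.mem_erase, Finset.mem_insert, Finset.mem_filter]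
    constructor
    · rintro ⟨hKS, hK0, (rfl | hK)⟩
      · exact absurd rfl hKS
      · exact hK
    · intro hK
      refine ⟨?_, ?_, Or.inr hK⟩
      · rintro rfl
        exact hSG (Finset.mem_filter.mpr hK)
      · rintro rfl
        exact Finset.not_nonempty_empty (hPne ∅ hK.1)
  -- fibers
  have hfib : ∀ I ∈ P, (I ∩ B).Nonempty →
      fiber (RB P B \ B) (fun x => (ι x : Finset α)) (I ∩ B) = I ∩ (RB P B \ B) := by
    intro I hI hIB
    ext x
    constructor
    · intro hx
      rw [fiber, Finset.mem_image] at hx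
      obtain ⟨a, ha, rfl⟩ := hx
      rw [Finset.mem_filter] at ha
      have hιa : (ι a : Finset α) = I ∩ B := ha.2
      have haS : (a : α) ∈ RB P B \ B := a.2
      have hxR : (a : α) ∈ RB P B := (Finset.mem_sdiff.mp haS).1
      simp only [RB, Finset.mem_sup, id] at hxR
      obtain ⟨I', hI', hxI'⟩ := hxR
      rw [Finset.mem_filter] at hI'
      have h2 := hι I' hI'.1 hI'.2 a hxI'
      rw [h2] at hιa
      have hII : I' = I := by
        by_contra hII
        obtain ⟨y, hy⟩ := hIB
        have hy' : y ∈ I' ∩ B := hιa ▸ hy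
        exact Finset.disjoint_left.mp (hPd I' hI'.1 I hI hII)
          (Finset.mem_inter.mp hy').1 (Finset.mem_inter.mp hy).1
      exact Finset.mem_inter.mpr ⟨hII ▸ hxI', haS⟩
    · intro hx
      obtain ⟨hxI, hxS⟩ := Finset.mem_inter.mp hx
      rw [fiber, Finset.mem_image]
      exact ⟨⟨x, hxS⟩, Finset.mem_filter.mpr ⟨Finset.mem_attach _ _,
        hι I hI hIB ⟨x, hxS⟩ hxI⟩, rfl⟩
  -- the image part reconstructs the members meeting B
  have himg : ((restrict P B).image
      (fun J => J ∪ fiber (RB P B \ B) (fun x => (ι x : Finset α)) J)) =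
      P.filter (fun I => (I ∩ B).Nonempty) := by
    simp only [restrict]
    rw [Finset.image_image]
    rw [show (P.filter fun I => (I ∩ B).Nonempty).image
        ((fun J => J ∪ fiber (RB P B \ B) (fun x => (ι x : Finset α)) J) ∘ (· ∩ B)) =
        (P.filter fun I => (I ∩ B).Nonempty).image id from ?_, Finset.image_id]
    apply Finset.image_congr
    intro I hIf
    rw [Finset.mem_coe, Finset.mem_filter] at hIf
    obtain ⟨hI, hIB⟩ := hIf
    simp only [Function.comp, id]
    rw [hfib I hI hIB]
    ext x
    simp only [Finset.mem_union, Finset.mem_inter, Finset.mem_sdiff]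
    constructor
    · rintro (⟨h, _⟩ | ⟨h, _⟩) <;> exact h
    · intro hx
      by_cases hxB : x ∈ B
      · exact Or.inl ⟨hx, hxB⟩
      · exact Or.inr ⟨hx, hsub I hI hIB hx, hxB⟩
  rw [ins, hq, himg]
  ext I
  simp only [Finset.mem_union, Finset.mem_filter]
  constructor
  · intro hI
    by_cases h : (I ∩ B).Nonempty
    · exact Or.inr ⟨hI, h⟩
    · exact Or.inl ⟨hI, Finset.not_nonempty_iff_eq_empty.mp h⟩
  · rintro (⟨hI, _⟩ | ⟨hI, _⟩) <;> exact hI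

end PartitionOps
end

section
/- Let P = {I_1, …, I_m}, Q, and S be partitions in a set A whose supports R(P), R(Q), R(S) are pairwise disjoint, let 1 ≤ a, b ≤ m with a ≠ b, and let ι : I_a → Q and μ : I_b → S be maps. Then (P ∘_a^ι Q) ∘^μ S = (P ∘_b^μ S) ∘^ι Q, where the outer insertion on the left is performed at the member I_b (which remains a member of P ∘_a^ι Q), and the outer insertion on the right is performed at the member I_a. -/
namespace PartitionOps

variable {α : Type*} [DecidableEq α]

lemma notMem_image_aux (P Q : Finset (Finset α)) (hQ : IsPartition Q)
    (hPQ : Disjoint (supp P) (supp Q)) (I : Finset α) (hI : I ∈ P)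
    (g : Finset α → Finset α) :
    I ∉ Q.image fun J => J ∪ g J := by
  intro h
  obtain ⟨J, hJ, hEq⟩ := Finset.mem_image.1 h
  obtain ⟨x, hx⟩ := hQ.1 J hJ
  have hxQ : x ∈ supp Q := Finset.le_sup (f := id) hJ hx
  have hxP : x ∈ supp P := Finset.le_sup (f := id) hI (hEq ▸ Finset.mem_union_left _ hx)
  exact Finset.disjoint_left.1 hPQ hxP hxQ

/-- for partitions `P`, `Q`, `S` with pairwise disjoint supports,
distinct members `Iₐ, I_b` of `P`, and maps `ι : Iₐ → Q`, `μ : I_b → S`, the two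
insertions commute: `(P ∘ₐ^ι Q) ∘^μ S = (P ∘_b^μ S) ∘^ι Q`, the outer insertions
being performed at the members `I_b` resp. `Iₐ`. -/
theorem ins_ins_comm (P Q S : Finset (Finset α))
    (hP : IsPartition P) (hQ : IsPartition Q) (hS : IsPartition S)
    (hPQ : Disjoint (supp P) (supp Q)) (hPS : Disjoint (supp P) (supp S))
    (hQS : Disjoint (supp Q) (supp S))
    (Ia Ib : Finset α) (hIa : Ia ∈ P) (hIb : Ib ∈ P) (hab : Ia ≠ Ib)
    (ι : {x // x ∈ Ia} → {J // J ∈ Q}) (μ : {x // x ∈ Ib} → {Kk // Kk ∈ S}) :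
    ins (ins P Ia Q ι) Ib S μ = ins (ins P Ib S μ) Ia Q ι := by
  have h1 := notMem_image_aux P Q hQ hPQ Ib hIb
    (fiber Ia (fun x => (ι x : Finset α)))
  have h2 := notMem_image_aux P S hS hPS Ia hIa
    (fiber Ib (fun x => (μ x : Finset α)))
  simp only [ins, Finset.erase_union_distrib, Finset.erase_eq_of_notMem h1,
    Finset.erase_eq_of_notMem h2]
  have : (P.erase Ia).erase Ib = (P.erase Ib).erase Ia := by
    ext x; simp only [Finset.mem_erase]; tauto
  rw [this]
  ac_rfl

end PartitionOps
end

section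
/- Let P = {I_1, …, I_m}, Q, and S be partitions in a set A whose supports R(P), R(Q), R(S) are pairwise disjoint. Then in the free vector space V on partitions in A, (P ∘ Q) ∘ S = P ∘ (Q ∘ S) + Σ_{1 ≤ a, b ≤ m, a ≠ b} Σ_{ι : I_a → Q} Σ_{μ : I_b → S} (P ∘_a^ι Q) ∘_b^μ S, where (P ∘_a^ι Q) ∘_b^μ S denotes the insertion of S at the member I_b of P ∘_a^ι Q via μ. -/
/-!
In `(P ∘ Q) ∘ S`, the partition `P ∘ₐ^ι Q` consists of the old members `I_b` (`b ≠ a`), which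
produce the correction sum, and the new members `J ∪ ι⁻¹(J)` for `J ∈ Q`. Inserting `S` into a new
member `J ∪ ι⁻¹(J)` via `μ` gives the same partition as first inserting `S` into `J` via
`κ = μ|_J` and then inserting the result into `I_a` via the map `ι'` sending `x` to `ι x` when
`ι x ≠ J`, and to `μ x ∪ κ⁻¹(μ x)` when `ι x = J`. Because the supports are disjoint and the
members nonempty, `ι` and `μ` can be read back from `κ` and `ι'`, so `(ι, μ) ↦ (κ, ι')` is a
bijection and these terms add up to `P ∘ (Q ∘ S)`.
-/

namespace PartitionOps

variable {α : Type*} [DecidableEq α]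

variable (Kf : Type*) [Field Kf] [CharZero Kf]

/-- The composition `P ∘ Q = Σ_{a} Σ_{ι : Iₐ → Q} P ∘ₐ^ι Q` of two partitions, as an
element of the free vector space on the partitions in `A`. -/
noncomputable def partComp (P Q : Finset (Finset α)) : Finset (Finset α) →₀ Kf :=
  ∑ Ia ∈ P, ∑ ι : {x // x ∈ Ia} → {J // J ∈ Q},
    Finsupp.single (ins P Ia Q ι) (1 : Kf)

/-- The bilinear extension of the composition to the free vector space. -/
noncomputable def compV (x y : Finset (Finset α) →₀ Kf) : Finset (Finset α) →₀ Kf :=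
  x.sum fun P c => y.sum fun Q d => (c * d) • partComp Kf P Q

lemma mem_fiber {B : Finset α} {f : {x // x ∈ B} → Finset α} {J : Finset α} {x : α} :
    x ∈ fiber B f J ↔ ∃ h : x ∈ B, f ⟨x, h⟩ = J := by
  simp [fiber]

lemma fiber_subset {B : Finset α} {f : {x // x ∈ B} → Finset α} {J : Finset α} :
    fiber B f J ⊆ B :=
  fun _ hx => (mem_fiber.mp hx).1

lemma subset_supp {P : Finset (Finset α)} {I : Finset α} (h : I ∈ P) : I ⊆ supp P :=
  Finset.le_sup (f := id) h

lemma not_subset_of_disjoint_supp {P Q : Finset (Finset α)} (hPQ : Disjoint (supp P) (supp Q))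
    {I J : Finset α} (hI : I ∈ P) (hIne : I.Nonempty) (hJ : J ∈ Q) : ¬ I ⊆ J := fun h =>
  let ⟨_, hx⟩ := hIne
  Finset.disjoint_left.mp hPQ (subset_supp hI hx) (subset_supp hJ (h hx))

lemma _root_.Finset.image_erase_of_injOn {β γ : Type*} [DecidableEq β] [DecidableEq γ]
    {f : β → γ} {s : Finset β} (hf : Set.InjOn f s) {a : β} (ha : a ∈ s) :
    (s.erase a).image f = (s.image f).erase (f a) := by
  ext c
  simp only [Finset.mem_image, Finset.mem_erase]
  constructor
  · rintro ⟨b, ⟨hba, hb⟩, rfl⟩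
    exact ⟨fun h => hba (hf hb ha h), b, hb, rfl⟩
  · rintro ⟨hc, b, hb, rfl⟩
    exact ⟨b, ⟨fun h => hc (h ▸ rfl), hb⟩, rfl⟩

/-- The member `J ∪ ι⁻¹(J)` of `P ∘ₐ^ι Q` coming from the member `J` of `Q`. -/
def insBlock {Q : Finset (Finset α)} (B : Finset α) (ι : {x // x ∈ B} → {J // J ∈ Q})
    (J : Finset α) : Finset α :=
  J ∪ fiber B (fun x => (ι x : Finset α)) J

section insBlock

variable {P Q : Finset (Finset α)} {B : Finset α} {ι : {x // x ∈ B} → {J // J ∈ Q}}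

lemma ins_eq_union_image (P : Finset (Finset α)) (B : Finset α) (Q : Finset (Finset α))
    (ι : {x // x ∈ B} → {J // J ∈ Q}) :
    ins P B Q ι = P.erase B ∪ Q.image (insBlock B ι) := rfl

lemma mem_insBlock {J : Finset α} {x : α} :
    x ∈ insBlock B ι J ↔ x ∈ J ∨ ∃ h : x ∈ B, (ι ⟨x, h⟩ : Finset α) = J := by
  rw [insBlock, Finset.mem_union, mem_fiber]

lemma subset_insBlock (J : Finset α) : J ⊆ insBlock B ι J := Finset.subset_union_left

lemma mem_insBlock_of_apply_eq {J : Finset α} {x : α} (hx : x ∈ B)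
    (h : (ι ⟨x, hx⟩ : Finset α) = J) : x ∈ insBlock B ι J :=
  mem_insBlock.mpr (Or.inr ⟨hx, h⟩)

lemma insBlock_inter_supp (hB : Disjoint B (supp Q)) {J : Finset α} (hJ : J ∈ Q) :
    insBlock B ι J ∩ supp Q = J := by
  rw [insBlock, Finset.union_inter_distrib_right, Finset.inter_eq_left.mpr (subset_supp hJ),
    Finset.disjoint_iff_inter_eq_empty.mp (hB.mono_left fiber_subset), Finset.union_empty]

lemma insBlock_injOn (hB : Disjoint B (supp Q)) : Set.InjOn (insBlock B ι) Q :=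
  fun J hJ J' hJ' h => by
    rw [← insBlock_inter_supp hB hJ, ← insBlock_inter_supp hB hJ', h]

lemma insBlock_notMem (hQ : ∀ J ∈ Q, J.Nonempty) (hPQ : Disjoint (supp P) (supp Q))
    {J : Finset α} (hJ : J ∈ Q) : insBlock B ι J ∉ P := fun h =>
  not_subset_of_disjoint_supp hPQ.symm hJ (hQ J hJ) h (subset_insBlock J)

lemma insBlock_mem_ins {J : Finset α} (hJ : J ∈ Q) :
    insBlock B ι J ∈ ins P B Q ι :=
  Finset.mem_union_right _ (Finset.mem_image_of_mem _ hJ)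

lemma mem_ins_of_mem_erase {I : Finset α} (hI : I ∈ P.erase B) : I ∈ ins P B Q ι :=
  Finset.mem_union_left _ hI

lemma image_ins {β : Type*} [DecidableEq β] (f : Finset α → β) :
    (ins P B Q ι).image f = (P.erase B).image f ∪ Q.image (f ∘ insBlock B ι) := by
  rw [ins_eq_union_image, Finset.image_union, Finset.image_image]

lemma sum_ins {M : Type*} [AddCommMonoid M] (f : Finset α → M)
    (hQ : ∀ J ∈ Q, J.Nonempty) (hPQ : Disjoint (supp P) (supp Q)) (hB : B ∈ P) :
    ∑ I ∈ ins P B Q ι, f I = ∑ I ∈ P.erase B, f I + ∑ J ∈ Q, f (insBlock B ι J) := by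
  have hdisj : Disjoint (P.erase B) (Q.image (insBlock B ι)) :=
    Finset.disjoint_right.mpr fun I hI hIP => by
      obtain ⟨J, hJ, rfl⟩ := Finset.mem_image.mp hI
      exact insBlock_notMem hQ hPQ hJ (Finset.mem_of_mem_erase hIP)
  rw [ins_eq_union_image, Finset.sum_union hdisj,
    Finset.sum_image (insBlock_injOn (hPQ.mono_left (subset_supp hB)))]

end insBlock

lemma heq_of_forall_mem_eq {β : Type*} {A B : Finset β} {W : Sort*} (h : A = B)
    (f : {y // y ∈ A} → W) (g : {y // y ∈ B} → W)
    (hfg : ∀ (y : β) (hA : y ∈ A) (hB : y ∈ B), f ⟨y, hA⟩ = g ⟨y, hB⟩) :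
    f ≍ g := by
  subst h
  exact heq_of_eq (funext fun y => hfg y.1 y.2 y.2)

lemma heq_of_forall_coe_eq {β : Type*} {X Y : Finset β} {D : Sort*} (h : X = Y)
    (f : D → {M // M ∈ X}) (g : D → {M // M ∈ Y}) (hfg : ∀ x, (f x : β) = g x) :
    f ≍ g := by
  subst h
  exact heq_of_eq (funext fun x => Subtype.ext (hfg x))

section assoc

variable {P Q S : Finset (Finset α)} {Ia J : Finset α}

def assocRestrict (ι : {x // x ∈ Ia} → {J' // J' ∈ Q})
    (μ : {y // y ∈ insBlock Ia ι J} → {K // K ∈ S}) : {y // y ∈ J} → {K // K ∈ S} :=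
  fun y => μ ⟨y, subset_insBlock J y.2⟩

def assocIota (ι : {x // x ∈ Ia} → {J' // J' ∈ Q})
    (μ : {y // y ∈ insBlock Ia ι J} → {K // K ∈ S}) :
    {x // x ∈ Ia} → {M // M ∈ ins Q J S (assocRestrict ι μ)} := fun x =>
  if hx : (ι x : Finset α) = J then
    ⟨insBlock J (assocRestrict ι μ) (μ ⟨x, mem_insBlock_of_apply_eq x.2 hx⟩),
      insBlock_mem_ins (μ _).2⟩
  else ⟨ι x, mem_ins_of_mem_erase (Finset.mem_erase.mpr ⟨hx, (ι x).2⟩)⟩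

section forward

variable (ι : {x // x ∈ Ia} → {J' // J' ∈ Q})
  (μ : {y // y ∈ insBlock Ia ι J} → {K // K ∈ S})

lemma coe_assocIota_of_ne {x : {x // x ∈ Ia}} (hx : (ι x : Finset α) ≠ J) :
    (assocIota ι μ x : Finset α) = ι x := by
  rw [assocIota, dif_neg hx]

lemma coe_assocIota_of_eq {x : {x // x ∈ Ia}} (hx : (ι x : Finset α) = J) :
    (assocIota ι μ x : Finset α) =
      insBlock J (assocRestrict ι μ) (μ ⟨x, mem_insBlock_of_apply_eq x.2 hx⟩) := by
  rw [assocIota, dif_pos hx]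

lemma insBlock_assocIota_of_ne (hS : ∀ K ∈ S, K.Nonempty) (hQS : Disjoint (supp Q) (supp S))
    {J' : Finset α} (hJ' : J' ∈ Q) (hne : J' ≠ J) :
    insBlock Ia (assocIota ι μ) J' = insBlock Ia ι J' := by
  ext z
  simp only [mem_insBlock]
  refine or_congr_right (exists_congr fun hz => ?_)
  by_cases hc : (ι ⟨z, hz⟩ : Finset α) = J
  · rw [coe_assocIota_of_eq ι μ hc, hc]
    refine iff_of_false (fun h => ?_) hne.symm
    have hK := (μ ⟨z, mem_insBlock_of_apply_eq hz hc⟩).2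
    exact not_subset_of_disjoint_supp hQS.symm hK (hS _ hK) hJ' (h ▸ subset_insBlock _)
  · rw [coe_assocIota_of_ne ι μ hc]

lemma insBlock_assocIota_insBlock (hS : ∀ K ∈ S, K.Nonempty) (hQS : Disjoint (supp Q) (supp S))
    (hJ : J ∈ Q) {K : Finset α} (hK : K ∈ S) :
    insBlock Ia (assocIota ι μ) (insBlock J (assocRestrict ι μ) K) =
      insBlock (insBlock Ia ι J) μ K := by
  ext z
  simp only [mem_insBlock]
  constructor
  · rintro ((hz | ⟨hzJ, hκ⟩) | ⟨hzIa, hι'⟩)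
    · exact Or.inl hz
    · exact Or.inr ⟨Or.inl hzJ, hκ⟩
    · by_cases hc : (ι ⟨z, hzIa⟩ : Finset α) = J
      · rw [coe_assocIota_of_eq ι μ hc] at hι'
        exact Or.inr ⟨Or.inr ⟨hzIa, hc⟩,
          insBlock_injOn (hQS.mono_left (subset_supp hJ)) (μ _).2 hK hι'⟩
      · rw [coe_assocIota_of_ne ι μ hc] at hι'
        exact absurd (hι' ▸ subset_insBlock K)
          (not_subset_of_disjoint_supp hQS.symm hK (hS K hK) (ι _).2)
  · rintro (hz | ⟨hzB, hμ⟩)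
    · exact Or.inl (Or.inl hz)
    by_cases hzJ : z ∈ J
    · exact Or.inl (Or.inr ⟨hzJ, hμ⟩)
    obtain ⟨hzIa, hc⟩ := hzB.resolve_left hzJ
    exact Or.inr ⟨hzIa, by rw [coe_assocIota_of_eq ι μ hc, hμ]⟩

theorem ins_ins_insBlock (hQ : ∀ J ∈ Q, J.Nonempty) (hS : ∀ K ∈ S, K.Nonempty)
    (hPQ : Disjoint (supp P) (supp Q)) (hQS : Disjoint (supp Q) (supp S))
    (hIa : Ia ∈ P) (hJ : J ∈ Q) :
    ins (ins P Ia Q ι) (insBlock Ia ι J) S μ =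
      ins P Ia (ins Q J S (assocRestrict ι μ)) (assocIota ι μ) := by
  rw [ins_eq_union_image (ins P Ia Q ι), ins_eq_union_image P, ins_eq_union_image P,
    image_ins, Finset.erase_union_distrib,
    Finset.erase_eq_of_notMem (fun h => insBlock_notMem hQ hPQ hJ (Finset.mem_of_mem_erase h)),
    ← Finset.image_erase_of_injOn (insBlock_injOn (hPQ.mono_left (subset_supp hIa))) hJ,
    Finset.union_assoc]
  congr 2
  · exact Finset.image_congr fun J' hJ' => (insBlock_assocIota_of_ne ι μ hS hQS
      (Finset.mem_of_mem_erase hJ') (Finset.ne_of_mem_erase hJ')).symm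
  · exact Finset.image_congr fun K hK => (insBlock_assocIota_insBlock ι μ hS hQS hJ hK).symm

end forward

lemma inter_supp_mem_and_eq_insBlock (hQS : Disjoint (supp Q) (supp S)) (hJ : J ∈ Q)
    {κ : {y // y ∈ J} → {K // K ∈ S}} {M : Finset α}
    (hM : M ∈ ins Q J S κ) (hM' : M ∉ Q.erase J) :
    M ∩ supp S ∈ S ∧ M = insBlock J κ (M ∩ supp S) := by
  rw [ins_eq_union_image] at hM
  obtain ⟨K, hK, rfl⟩ := Finset.mem_image.mp ((Finset.mem_union.mp hM).resolve_left hM')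
  rw [insBlock_inter_supp (hQS.mono_left (subset_supp hJ)) hK]
  exact ⟨hK, rfl⟩

def unassocIota (hJ : J ∈ Q) (κ : {y // y ∈ J} → {K // K ∈ S})
    (ι' : {x // x ∈ Ia} → {M // M ∈ ins Q J S κ}) : {x // x ∈ Ia} → {J' // J' ∈ Q} := fun x =>
  if h : (ι' x : Finset α) ∈ Q.erase J then ⟨ι' x, Finset.mem_of_mem_erase h⟩ else ⟨J, hJ⟩

section backward

variable (hJ : J ∈ Q) (κ : {y // y ∈ J} → {K // K ∈ S})
  (ι' : {x // x ∈ Ia} → {M // M ∈ ins Q J S κ})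

lemma coe_unassocIota_of_mem {x : {x // x ∈ Ia}} (hx : (ι' x : Finset α) ∈ Q.erase J) :
    (unassocIota hJ κ ι' x : Finset α) = ι' x := by
  rw [unassocIota, dif_pos hx]

lemma coe_unassocIota_of_notMem {x : {x // x ∈ Ia}} (hx : (ι' x : Finset α) ∉ Q.erase J) :
    (unassocIota hJ κ ι' x : Finset α) = J := by
  rw [unassocIota, dif_neg hx]

lemma notMem_erase_of_unassocIota_eq {x : {x // x ∈ Ia}}
    (hx : (unassocIota hJ κ ι' x : Finset α) = J) : (ι' x : Finset α) ∉ Q.erase J := fun h =>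
  Finset.ne_of_mem_erase h ((coe_unassocIota_of_mem hJ κ ι' h).symm.trans hx)

end backward

def unassocMu (hQS : Disjoint (supp Q) (supp S)) (hJ : J ∈ Q) (κ : {y // y ∈ J} → {K // K ∈ S})
    (ι' : {x // x ∈ Ia} → {M // M ∈ ins Q J S κ}) :
    {y // y ∈ insBlock Ia (unassocIota hJ κ ι') J} → {K // K ∈ S} := fun y =>
  if hy : y.1 ∈ J then κ ⟨y, hy⟩
  else
    have hyIa : y.1 ∈ Ia := fiber_subset ((Finset.mem_union.mp y.2).resolve_left hy)
    ⟨(ι' ⟨y, hyIa⟩ : Finset α) ∩ supp S,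
      (inter_supp_mem_and_eq_insBlock hQS hJ (ι' _).2 <| by
        obtain ⟨_, hx⟩ := (mem_insBlock.mp y.2).resolve_left hy
        exact notMem_erase_of_unassocIota_eq hJ κ ι' hx).1⟩

lemma unassocIota_assocIota (hS : ∀ K ∈ S, K.Nonempty) (hQS : Disjoint (supp Q) (supp S))
    (hJ : J ∈ Q) (ι : {x // x ∈ Ia} → {J' // J' ∈ Q})
    (μ : {y // y ∈ insBlock Ia ι J} → {K // K ∈ S}) :
    unassocIota hJ (assocRestrict ι μ) (assocIota ι μ) = ι := by
  funext x
  apply Subtype.ext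
  by_cases hc : (ι x : Finset α) = J
  · refine (coe_unassocIota_of_notMem hJ _ _ fun h => ?_).trans hc.symm
    have hK := (μ ⟨x, mem_insBlock_of_apply_eq x.2 hc⟩).2
    refine not_subset_of_disjoint_supp hQS.symm hK (hS _ hK) (Finset.mem_of_mem_erase h) ?_
    rw [coe_assocIota_of_eq ι μ hc]
    exact subset_insBlock _
  · have hx := coe_assocIota_of_ne ι μ hc
    rw [coe_unassocIota_of_mem hJ _ _ (hx ▸ Finset.mem_erase.mpr ⟨hc, (ι x).2⟩), hx]

lemma unassoc_assoc (hS : ∀ K ∈ S, K.Nonempty) (hQS : Disjoint (supp Q) (supp S))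
    (hJ : J ∈ Q) (ι : {x // x ∈ Ia} → {J' // J' ∈ Q})
    (μ : {y // y ∈ insBlock Ia ι J} → {K // K ∈ S}) :
    (⟨unassocIota hJ (assocRestrict ι μ) (assocIota ι μ),
        unassocMu hQS hJ (assocRestrict ι μ) (assocIota ι μ)⟩ :
      Σ ι : {x // x ∈ Ia} → {J' // J' ∈ Q}, {y // y ∈ insBlock Ia ι J} → {K // K ∈ S}) =
      ⟨ι, μ⟩ := by
  have hι := unassocIota_assocIota hS hQS hJ ι μ
  refine Sigma.ext hι <|
    heq_of_forall_mem_eq (congrArg (insBlock Ia · J) hι) _ _ fun y hy hy' => ?_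
  by_cases hyJ : y ∈ J
  · simp only [unassocMu, dif_pos hyJ]
    rfl
  · simp only [unassocMu, dif_neg hyJ]
    obtain ⟨hyIa, hc⟩ := (mem_insBlock.mp hy').resolve_left hyJ
    apply Subtype.ext
    dsimp only
    rw [coe_assocIota_of_eq ι μ hc]
    exact insBlock_inter_supp (hQS.mono_left (subset_supp hJ)) (μ _).2

lemma assocRestrict_unassocMu (hQS : Disjoint (supp Q) (supp S)) (hJ : J ∈ Q)
    (κ : {y // y ∈ J} → {K // K ∈ S}) (ι' : {x // x ∈ Ia} → {M // M ∈ ins Q J S κ}) :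
    assocRestrict (unassocIota hJ κ ι') (unassocMu hQS hJ κ ι') = κ := by
  funext y
  simp only [assocRestrict, unassocMu, dif_pos y.2]

lemma assoc_unassoc (hQS : Disjoint (supp Q) (supp S)) (hIa : Disjoint Ia (supp Q)) (hJ : J ∈ Q)
    (κ : {y // y ∈ J} → {K // K ∈ S}) (ι' : {x // x ∈ Ia} → {M // M ∈ ins Q J S κ}) :
    (⟨assocRestrict (unassocIota hJ κ ι') (unassocMu hQS hJ κ ι'),
        assocIota (unassocIota hJ κ ι') (unassocMu hQS hJ κ ι')⟩ :
      Σ κ : {y // y ∈ J} → {K // K ∈ S}, {x // x ∈ Ia} → {M // M ∈ ins Q J S κ}) =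
      ⟨κ, ι'⟩ := by
  have hκ := assocRestrict_unassocMu hQS hJ κ ι'
  refine Sigma.ext hκ (heq_of_forall_coe_eq (congrArg (ins Q J S ·) hκ) _ _ fun x => ?_)
  by_cases hx : (ι' x : Finset α) ∈ Q.erase J
  · have hι := coe_unassocIota_of_mem hJ κ ι' hx
    rw [coe_assocIota_of_ne _ _ (hι ▸ Finset.ne_of_mem_erase hx), hι]
  · rw [coe_assocIota_of_eq _ _ (coe_unassocIota_of_notMem hJ κ ι' hx), hκ]
    have hxJ : x.1 ∉ J := fun h => Finset.disjoint_left.mp hIa x.2 (subset_supp hJ h)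
    simp only [unassocMu, dif_neg hxJ]
    exact (inter_supp_mem_and_eq_insBlock hQS hJ (ι' x).2 hx).2.symm

def assocEquiv (hS : ∀ K ∈ S, K.Nonempty) (hQS : Disjoint (supp Q) (supp S))
    (hIa : Disjoint Ia (supp Q)) (hJ : J ∈ Q) :
    (Σ ι : {x // x ∈ Ia} → {J' // J' ∈ Q}, {y // y ∈ insBlock Ia ι J} → {K // K ∈ S}) ≃
      Σ κ : {y // y ∈ J} → {K // K ∈ S}, {x // x ∈ Ia} → {M // M ∈ ins Q J S κ} where
  toFun p := ⟨assocRestrict p.1 p.2, assocIota p.1 p.2⟩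
  invFun q := ⟨unassocIota hJ q.1 q.2, unassocMu hQS hJ q.1 q.2⟩
  left_inv p := unassoc_assoc hS hQS hJ p.1 p.2
  right_inv q := assoc_unassoc hQS hIa hJ q.1 q.2

theorem sum_ins_ins_insBlock {M : Type*} [AddCommMonoid M] (f : Finset (Finset α) → M)
    (hQ : ∀ J ∈ Q, J.Nonempty) (hS : ∀ K ∈ S, K.Nonempty)
    (hPQ : Disjoint (supp P) (supp Q)) (hQS : Disjoint (supp Q) (supp S))
    (hIa : Ia ∈ P) (hJ : J ∈ Q) :
    ∑ ι : {x // x ∈ Ia} → {J' // J' ∈ Q}, ∑ μ : {y // y ∈ insBlock Ia ι J} → {K // K ∈ S},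
        f (ins (ins P Ia Q ι) (insBlock Ia ι J) S μ) =
      ∑ κ : {y // y ∈ J} → {K // K ∈ S}, ∑ ι' : {x // x ∈ Ia} → {M // M ∈ ins Q J S κ},
        f (ins P Ia (ins Q J S κ) ι') := by
  rw [← Fintype.sum_sigma', ← Fintype.sum_sigma']
  exact Fintype.sum_equiv (assocEquiv hS hQS (hPQ.mono_left (subset_supp hIa)) hJ) _ _
    fun p => congrArg f (ins_ins_insBlock p.1 p.2 hQ hS hPQ hQS hIa hJ)

end assoc

section compV

variable {F : Type*} [Field F]

lemma compV_single_single (P Q : Finset (Finset α)) :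
    compV F (Finsupp.single P 1) (Finsupp.single Q 1) = partComp F P Q := by
  simp [compV]

lemma compV_sum_left {ι : Type*} (s : Finset ι) (x : ι → Finset (Finset α) →₀ F)
    (y : Finset (Finset α) →₀ F) : compV F (∑ i ∈ s, x i) y = ∑ i ∈ s, compV F (x i) y := by
  refine (Finsupp.sum_finsetSum_index (fun _ => by simp) fun _ _ _ => ?_).symm
  simp [add_mul, add_smul, Finsupp.sum_add]

lemma compV_sum_right {ι : Type*} (s : Finset ι) (x : Finset (Finset α) →₀ F)
    (y : ι → Finset (Finset α) →₀ F) : compV F x (∑ i ∈ s, y i) = ∑ i ∈ s, compV F x (y i) := by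
  simp only [compV]
  rw [← Finsupp.sum_finsetSum_comm]
  refine Finsupp.sum_congr fun _ _ =>
    (Finsupp.sum_finsetSum_index (fun _ => by simp) fun _ _ _ => ?_).symm
  simp [mul_add, add_smul]

lemma partComp_ins {P Q : Finset (Finset α)} (S : Finset (Finset α))
    {Ia : Finset α} (ι : {x // x ∈ Ia} → {J // J ∈ Q}) (hQ : ∀ J ∈ Q, J.Nonempty)
    (hPQ : Disjoint (supp P) (supp Q)) (hIa : Ia ∈ P) :
    partComp F (ins P Ia Q ι) S =
      (∑ Ib ∈ P.erase Ia, ∑ μ : {x // x ∈ Ib} → {Kk // Kk ∈ S},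
        Finsupp.single (ins (ins P Ia Q ι) Ib S μ) 1) +
      ∑ J ∈ Q, ∑ μ : {y // y ∈ insBlock Ia ι J} → {Kk // Kk ∈ S},
        Finsupp.single (ins (ins P Ia Q ι) (insBlock Ia ι J) S μ) 1 :=
  sum_ins _ hQ hPQ hIa

lemma compV_partComp_single (P Q S : Finset (Finset α)) :
    compV F (partComp F P Q) (Finsupp.single S 1) =
      ∑ Ia ∈ P, ∑ ι : {x // x ∈ Ia} → {J // J ∈ Q}, partComp F (ins P Ia Q ι) S := by
  rw [partComp]
  simp only [compV_sum_left, compV_single_single]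

lemma compV_single_partComp (P Q S : Finset (Finset α)) :
    compV F (Finsupp.single P 1) (partComp F Q S) =
      ∑ J ∈ Q, ∑ κ : {y // y ∈ J} → {Kk // Kk ∈ S}, partComp F P (ins Q J S κ) := by
  rw [partComp]
  simp only [compV_sum_right, compV_single_single]

lemma sum_ins_ins_insBlock_eq_sum_partComp {P Q S : Finset (Finset α)}
    (hQ : ∀ J ∈ Q, J.Nonempty) (hS : ∀ K ∈ S, K.Nonempty)
    (hPQ : Disjoint (supp P) (supp Q)) (hQS : Disjoint (supp Q) (supp S)) :
    ∑ Ia ∈ P, ∑ ι : {x // x ∈ Ia} → {J // J ∈ Q}, ∑ J ∈ Q,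
        ∑ μ : {y // y ∈ insBlock Ia ι J} → {Kk // Kk ∈ S},
          Finsupp.single (ins (ins P Ia Q ι) (insBlock Ia ι J) S μ) (1 : F) =
      ∑ J ∈ Q, ∑ κ : {y // y ∈ J} → {Kk // Kk ∈ S}, partComp F P (ins Q J S κ) := by
  calc _ = ∑ Ia ∈ P, ∑ J ∈ Q, ∑ κ : {y // y ∈ J} → {Kk // Kk ∈ S},
          ∑ ι' : {x // x ∈ Ia} → {M // M ∈ ins Q J S κ},
            Finsupp.single (ins P Ia (ins Q J S κ) ι') (1 : F) :=
        Finset.sum_congr rfl fun Ia hIa => Finset.sum_comm.trans <|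
          Finset.sum_congr rfl fun J hJ =>
            sum_ins_ins_insBlock (Finsupp.single · 1) hQ hS hPQ hQS hIa hJ
    _ = _ := Finset.sum_comm.trans <| Finset.sum_congr rfl fun _ _ => Finset.sum_comm

end compV

theorem comp_comp (P Q S : Finset (Finset α))
    (hQ : IsPartition Q) (hS : IsPartition S)
    (hPQ : Disjoint (supp P) (supp Q))
    (hQS : Disjoint (supp Q) (supp S)) :
    compV Kf (partComp Kf P Q) (Finsupp.single S 1) =
      compV Kf (Finsupp.single P 1) (partComp Kf Q S) +
        ∑ Ia ∈ P, ∑ Ib ∈ P.erase Ia,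
          ∑ ι : {x // x ∈ Ia} → {J // J ∈ Q},
            ∑ μ : {x // x ∈ Ib} → {Kk // Kk ∈ S},
              Finsupp.single (ins (ins P Ia Q ι) Ib S μ) (1 : Kf) := by
  rw [compV_partComp_single, compV_single_partComp,
    ← sum_ins_ins_insBlock_eq_sum_partComp hQ.1 hS.1 hPQ hQS, add_comm,
    Finset.sum_congr rfl fun Ia hIa => Finset.sum_congr rfl fun ι _ =>
      partComp_ins (F := Kf) S ι hQ.1 hPQ hIa]
  simp only [Finset.sum_add_distrib]
  exact congrArg (· + _) (Finset.sum_congr rfl fun _ _ => Finset.sum_comm)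

end PartitionOps
end
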